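/- arXiv:1512.00494 — 4 statements merged into one kernel-verified Lean document; each statement's English description precedes it below -/
import Mathlib

section
/- Let n₁,…,n_r ≥ 1 be integers with n = n₁+⋯+n_r, and let π be a non-crossing partition of [n] without singleton blocks that respects the interval partition n₁⊗⋯⊗n_r with blocks B₁,…,B_r. Let I₁,…,I_m ⊆ {1,…,r} be the vertex sets of the connected components of the graph C_π on vertices {B₁,…,B_r} having an edge between B_i and B_j whenever some block of π meets both. For q = 1,…,m, let π_q be the restriction of π to ∪_{j ∈ I_q} B_j, relabeled as a partition of [Σ_{j ∈ I_q} n_j]; then each π_q is a non-crossing partition without singletons that respects and connects the interval partition ⊗_{j ∈ I_q} n_j, and for all bounded measurable functions f_j : ℝ₊^{n_j} → ℂ with bounded support (j = 1,…,r), the partition integral factorizes: ∫_π f₁ ⊗ ⋯ ⊗ f_r = Π_{q=1}^{m} ∫_{π_q} ⊗_{j ∈ I_q} f_j. -/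
open MeasureTheory Filter Finset Topology
open scoped ENNReal

noncomputable section

/-- The index set of the tensor space `ℝ₊^{n 0} ⊗ ⋯ ⊗ ℝ₊^{n (r-1)}`:
positions grouped into `r` consecutive interval blocks of sizes `n i`. -/
abbrev MIdx {r : ℕ} (n : Fin r → ℕ) : Type := Σ i : Fin r, Fin (n i)

/-- The (lexicographic) linear order of the positions in `MIdx n`, corresponding to the
usual order of `{1, …, n₁ + ⋯ + n_r}`. -/
def mlt {r : ℕ} {n : Fin r → ℕ} (a b : MIdx n) : Prop :=
  a.1 < b.1 ∨ (a.1 = b.1 ∧ (a.2 : ℕ) < (b.2 : ℕ))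

/-- The nonnegative orthant `ℝ₊^ι`. -/
def orth (ι : Type*) : Set (ι → ℝ) := {t | ∀ i, 0 ≤ t i}

/-- `π` is a partition of the type `ι`: the blocks are nonempty and every element belongs
to exactly one block. -/
def IsPartition {ι : Type*} (π : Finset (Finset ι)) : Prop :=
  (∀ B ∈ π, B.Nonempty) ∧ ∀ j : ι, ∃! B, B ∈ π ∧ j ∈ B

/-- `π` has no singleton blocks. -/
def NoSingletons {ι : Type*} (π : Finset (Finset ι)) : Prop := ∀ B ∈ π, 2 ≤ B.card

/-- All blocks of `π` have cardinality two. -/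
def IsPairing {ι : Type*} (π : Finset (Finset ι)) : Prop := ∀ B ∈ π, B.card = 2

/-- `π` has at least one block of cardinality at least three. -/
def HasBigBlock {ι : Type*} (π : Finset (Finset ι)) : Prop := ∃ B ∈ π, 3 ≤ B.card

/-- `π` respects the grouping given by the labelling `lbl`: no block contains two distinct
elements with the same label. -/
def RespectsG {ι κ : Type*} (lbl : ι → κ) (π : Finset (Finset ι)) : Prop :=
  ∀ B ∈ π, ∀ a ∈ B, ∀ b ∈ B, lbl a = lbl b → a = b

/-- `π` is non-crossing with respect to the order `lt`. -/
def NonCrossingG {ι : Type*} (lt : ι → ι → Prop) (π : Finset (Finset ι)) : Prop :=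
  ∀ B₁ ∈ π, ∀ B₂ ∈ π, B₁ ≠ B₂ → ∀ x₁ ∈ B₁, ∀ y₁ ∈ B₁, ∀ x₂ ∈ B₂, ∀ y₂ ∈ B₂,
    ¬ (lt x₁ x₂ ∧ lt x₂ y₁ ∧ lt y₁ y₂)

/-- some block of `π` contains an element labelled `i` and an element labelled `j`. -/
def LinksG {ι κ : Type*} (lbl : ι → κ) (π : Finset (Finset ι)) (i j : κ) : Prop :=
  ∃ B ∈ π, (∃ a ∈ B, lbl a = i) ∧ (∃ b ∈ B, lbl b = j)

/-- the graph on the labels in `S`, with edges given by `LinksG`, is connected. -/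
def ConnectsG {ι κ : Type*} (lbl : ι → κ) (π : Finset (Finset ι)) (S : Set κ) : Prop :=
  ∀ i ∈ S, ∀ j ∈ S, Relation.ReflTransGen (LinksG lbl π) i j

/-- `π` respects the interval partition `n₁ ⊗ ⋯ ⊗ n_r`. -/
abbrev Respects {r : ℕ} {n : Fin r → ℕ} (π : Finset (Finset (MIdx n))) : Prop :=
  RespectsG Sigma.fst π

/-- `π` is non-crossing (with respect to the order of positions). -/
abbrev NonCrossing {r : ℕ} {n : Fin r → ℕ} (π : Finset (Finset (MIdx n))) : Prop :=
  NonCrossingG mlt π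

/-- `π` connects the interval partition `n₁ ⊗ ⋯ ⊗ n_r`. -/
abbrev Connects {r : ℕ} {n : Fin r → ℕ} (π : Finset (Finset (MIdx n))) : Prop :=
  ConnectsG Sigma.fst π Set.univ

open scoped Classical in
/-- A block of `π` containing `j` (junk value `∅` if there is none). -/
def blockOf {ι : Type*} (π : Finset (Finset ι)) (j : ι) : Finset ι :=
  if h : ∃ B ∈ π, j ∈ B then h.choose else ∅

/-- The partition integral `∫_π f`: the integral, over the nonnegative orthant indexed by the
blocks of `π`, of the function obtained from `f` by identifying the variables lying in a
common block of `π` (one integration variable per block). -/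
def partInt {ι : Type*} [Fintype ι] [DecidableEq ι] (π : Finset (Finset ι))
    {E : Type*} [NormedAddCommGroup E] [NormedSpace ℝ E] (f : (ι → ℝ) → E) : E :=
  ∫ y in orth {B : Finset ι // B ∈ π},
    f (fun j => if h : blockOf π j ∈ π then y ⟨blockOf π j, h⟩ else 0)

/-- The tensor product `F 0 ⊗ ⋯ ⊗ F (r-1)` as a function on `ℝ^{MIdx n}`. -/
def tensor {r : ℕ} {n : Fin r → ℕ} {E : Type*} [CommMonoid E]
    (F : ∀ i : Fin r, (Fin (n i) → ℝ) → E) : (MIdx n → ℝ) → E :=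
  fun t => ∏ i : Fin r, F i (fun j => t ⟨i, j⟩)

/-- Extension of a vector `t ∈ ℝ^k` to an everywhere-defined family (zero out of range). -/
def ext {k : ℕ} (t : Fin k → ℝ) (j : ℕ) : ℝ := if h : j < k then t ⟨j, h⟩ else 0

/-- The `p`-th arc contraction `f ⌢_p g`: the middle `p` variables are integrated out
(in reversed pairing) over `ℝ₊^p`. -/
def arcC (n m p : ℕ) (f : (Fin n → ℝ) → ℂ) (g : (Fin m → ℝ) → ℂ) :
    (Fin (n + m - 2 * p) → ℝ) → ℂ := fun t =>
  ∫ s in orth (Fin p),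
    f (fun j => if (j : ℕ) < n - p then ext t (j : ℕ) else ext s ((j : ℕ) - (n - p))) *
    g (fun j => if (j : ℕ) < p then ext s (p - 1 - (j : ℕ)) else ext t (n - p + ((j : ℕ) - p)))

/-- The `q`-th star contraction `f ⋆_q g` (also written `f ⋆_q^{q-1} g`): `q - 1` middle
variables are integrated out over `ℝ₊^{q-1}` and one variable is shared (identified). -/
def starC (n m q : ℕ) (f : (Fin n → ℝ) → ℂ) (g : (Fin m → ℝ) → ℂ) :
    (Fin (n + m - 2 * q + 1) → ℝ) → ℂ := fun t =>
  ∫ s in orth (Fin (q - 1)),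
    f (fun j => if (j : ℕ) < n - q + 1 then ext t (j : ℕ) else ext s ((j : ℕ) - (n - q + 1))) *
    g (fun j => if (j : ℕ) < q - 1 then ext s (q - 1 - 1 - (j : ℕ))
        else ext t (n - q + ((j : ℕ) - (q - 1))))

/-- `f ⋆_{ℓ+p}^{ℓ} g` : the contraction with `ℓ` integrated variables and `p ∈ {0,1}`
identified variables; for `p = 0` this is the arc contraction `f ⌢_ℓ g`, and for `p = 1`
it is the star contraction `f ⋆_{ℓ+1} g`. -/
def starpC (n m ℓ p : ℕ) (f : (Fin n → ℝ) → ℂ) (g : (Fin m → ℝ) → ℂ) :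
    (Fin (n + m - 2 * ℓ - p) → ℝ) → ℂ := fun t =>
  if p = 0 then arcC n m ℓ f g (fun j => ext t (j : ℕ))
  else starC n m (ℓ + 1) f g (fun j => ext t (j : ℕ))

/-- The `L²(ℝ₊^ι)` norm. -/
def l2norm {ι : Type*} [Fintype ι] (h : (ι → ℝ) → ℂ) : ℝ≥0∞ :=
  eLpNorm h 2 (volume.restrict (orth ι))

/-- `f` is mirror-symmetric: `f(t₁,…,tₙ) = conj (f(tₙ,…,t₁))` for a.e. `t ∈ ℝ₊ⁿ`. -/
def MirrorSymmetric {n : ℕ} (f : (Fin n → ℝ) → ℂ) : Prop :=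
  ∀ᵐ t ∂(volume.restrict (orth (Fin n))), f t = (starRingEnd ℂ) (f (fun i => t i.rev))

/-- `f` is bounded and has bounded support. -/
def BddBddSupp {n : ℕ} (f : (Fin n → ℝ) → ℂ) : Prop :=
  (∃ C, ∀ t, ‖f t‖ ≤ C) ∧ ∃ R, ∀ t, f t ≠ 0 → ∀ i, |t i| ≤ R

/-- The sequence `f` is tamed: every `f k` is bounded with bounded support and, for every
`p ≥ 2` and every partition `π` of `[pn]` without singletons respecting `n ⊗ ⋯ ⊗ n`
(`p` factors), the sequence `k ↦ ∫_π |f k|^{⊗p}` is bounded. -/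
def Tamed {n : ℕ} (f : ℕ → (Fin n → ℝ) → ℂ) : Prop :=
  (∀ k, BddBddSupp (f k)) ∧
  ∀ p : ℕ, 2 ≤ p → ∀ π : Finset (Finset (MIdx (fun _ : Fin p => n))),
    IsPartition π → NoSingletons π → Respects π →
    ∃ C : ℝ, ∀ k, partInt π (tensor (fun _ x => ‖f k x‖)) ≤ C

open scoped Classical in
/-- `∑_{π ∈ NC_{≥2}(n_{i₁} ⊗ ⋯ ⊗ n_{i_r})} ∫_π f^{(i₁)} ⊗ ⋯ ⊗ f^{(i_r)}`, which by the
diagram formula is the joint moment `φ[I(f^{(i₁)}) ⋯ I(f^{(i_r)})]`. -/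
def momentSum {d : ℕ} (n : Fin d → ℕ) {r : ℕ} (idx : Fin r → Fin d)
    (f : ∀ i : Fin d, (Fin (n i) → ℝ) → ℂ) : ℂ :=
  ∑ π ∈ Finset.univ.filter
      (fun π : Finset (Finset (MIdx (fun a => n (idx a)))) =>
        IsPartition π ∧ NoSingletons π ∧ NonCrossing π ∧ Respects π),
    partInt π (tensor (fun a => f (idx a)))

open scoped Classical in
/-- `∑_{π ∈ NC_{≥2+}(n_{i₁} ⊗ ⋯ ⊗ n_{i_r})} ∫_π f^{(i₁)} ⊗ ⋯ ⊗ f^{(i_r)}`: the part of the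
diagram sum over partitions having at least one block of cardinality at least `3`. -/
def momentSumPlus {d : ℕ} (n : Fin d → ℕ) {r : ℕ} (idx : Fin r → Fin d)
    (f : ∀ i : Fin d, (Fin (n i) → ℝ) → ℂ) : ℂ :=
  ∑ π ∈ Finset.univ.filter
      (fun π : Finset (Finset (MIdx (fun a => n (idx a)))) =>
        IsPartition π ∧ NoSingletons π ∧ HasBigBlock π ∧ NonCrossing π ∧ Respects π),
    partInt π (tensor (fun a => f (idx a)))

open scoped Classical in
/-- `∑_{π ∈ NC₂(n_{i₁} ⊗ ⋯ ⊗ n_{i_r})} ∫_π f^{(i₁)} ⊗ ⋯ ⊗ f^{(i_r)}`: the part of the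
diagram sum over non-crossing (respecting) pairings. -/
def pairingSum {d : ℕ} (n : Fin d → ℕ) {r : ℕ} (idx : Fin r → Fin d)
    (f : ∀ i : Fin d, (Fin (n i) → ℝ) → ℂ) : ℂ :=
  ∑ π ∈ Finset.univ.filter
      (fun π : Finset (Finset (MIdx (fun a => n (idx a)))) =>
        IsPartition π ∧ IsPairing π ∧ NonCrossing π ∧ Respects π),
    partInt π (tensor (fun a => f (idx a)))

open scoped Classical in
/-- `∏_{{a,b} ∈ σ} c(i_a, i_b)` for a pairing `σ` of `Fin r`. -/
def pairProd {r d : ℕ} (c : Matrix (Fin d) (Fin d) ℝ) (idx : Fin r → Fin d)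
    (σ : Finset (Finset (Fin r))) : ℝ :=
  ∏ B ∈ σ, if h : B.Nonempty then c (idx (B.min' h)) (idx (B.max' h)) else 1

open scoped Classical in
/-- `∑_{σ ∈ NC₂(r)} ∏_{{a,b} ∈ σ} c(i_a, i_b)`: the joint moment
`φ(s_{i₁} ⋯ s_{i_r})` of a semicircular family with covariance `c`. -/
def semicircMoment {r d : ℕ} (c : Matrix (Fin d) (Fin d) ℝ) (idx : Fin r → Fin d) : ℝ :=
  ∑ σ ∈ Finset.univ.filter
      (fun σ : Finset (Finset (Fin r)) =>
        IsPartition σ ∧ IsPairing σ ∧ NonCrossingG (· < ·) σ),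
    pairProd c idx σ

/-- The restriction of a partition `π` of `MIdx n` to the positions whose interval label
lies in `S`, viewed as a partition of the corresponding sub-index set. -/
def restrictPart {r : ℕ} {n : Fin r → ℕ} (π : Finset (Finset (MIdx n))) (S : Finset (Fin r)) :
    Finset (Finset {a : MIdx n // a.1 ∈ S}) :=
  (π.filter (fun B => ∀ a ∈ B, a.1 ∈ S)).image (fun B => B.subtype (fun a => a.1 ∈ S))

/-- The tensor product `⊗_{j ∈ I q} f j` viewed as a function on the sub-index set of the
positions with label in `I q`. -/
def subTensor {r : ℕ} {n : Fin r → ℕ} {m : ℕ} (I : Fin m → Finset (Fin r)) (q : Fin m)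
    (f : ∀ i : Fin r, (Fin (n i) → ℝ) → ℂ) : ({a : MIdx n // a.1 ∈ I q} → ℝ) → ℂ :=
  fun t => ∏ j ∈ (I q).attach, f j.1 (fun v => t ⟨⟨j.1, v⟩, j.2⟩)

/-!
Every block of `π` lies in a single component, so the blocks of `π` are the disjoint union, over
the components `q`, of the blocks of the restrictions `π_q`; restricting to a union of blocks
keeps a partition a partition and preserves the absence of singletons, non-crossing, respecting
and, by the choice of the components, connecting. Reindexing the integration variables of `∫_π`
along this decomposition turns `ℝ₊^{blocks of π}` into `∏_q ℝ₊^{blocks of π_q}`, on which the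
tensor product is a product of functions of separate groups of variables, and Fubini's theorem
factorizes the integral.
-/

namespace IsPartition

variable {ι : Type*} {π : Finset (Finset ι)}

theorem blockOf_mem_and_mem_blockOf (hπ : IsPartition π) (j : ι) :
    blockOf π j ∈ π ∧ j ∈ blockOf π j := by
  classical
  obtain ⟨B, ⟨hB, hj⟩, -⟩ := hπ.2 j
  have hex : ∃ B ∈ π, j ∈ B := ⟨B, hB, hj⟩
  rw [blockOf, dif_pos hex]
  exact hex.choose_spec

theorem blockOf_mem (hπ : IsPartition π) (j : ι) : blockOf π j ∈ π :=
  (hπ.blockOf_mem_and_mem_blockOf j).1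

theorem mem_blockOf (hπ : IsPartition π) (j : ι) : j ∈ blockOf π j :=
  (hπ.blockOf_mem_and_mem_blockOf j).2

theorem blockOf_eq (hπ : IsPartition π) {B : Finset ι} {j : ι} (hB : B ∈ π) (hj : j ∈ B) :
    blockOf π j = B :=
  (hπ.2 j).unique ⟨hπ.blockOf_mem j, hπ.mem_blockOf j⟩ ⟨hB, hj⟩

end IsPartition

def restrictTo {ι : Type*} [DecidableEq ι] (π : Finset (Finset ι)) (p : ι → Prop)
    [DecidablePred p] : Finset (Finset {a // p a}) :=
  (π.filter (fun B => ∀ a ∈ B, p a)).image (fun B => B.subtype p)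

theorem restrictPart_eq_restrictTo {r : ℕ} {n : Fin r → ℕ} (π : Finset (Finset (MIdx n)))
    (S : Finset (Fin r)) : restrictPart π S = restrictTo π (fun a => a.1 ∈ S) := by
  unfold restrictPart restrictTo
  congr

section restrictTo

variable {ι : Type*} [DecidableEq ι] {π : Finset (Finset ι)} {p : ι → Prop} [DecidablePred p]

theorem mem_restrictTo {C : Finset {a // p a}} :
    C ∈ restrictTo π p ↔ ∃ B ∈ π, (∀ a ∈ B, p a) ∧ B.subtype p = C := by
  simp [restrictTo, and_assoc]

theorem subtype_mem_restrictTo {B : Finset ι} (hB : B ∈ π) (hBp : ∀ a ∈ B, p a) :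
    B.subtype p ∈ restrictTo π p :=
  mem_restrictTo.2 ⟨B, hB, hBp, rfl⟩

theorem map_subtype_mem_of_mem_restrictTo {C : Finset {a // p a}} (hC : C ∈ restrictTo π p) :
    C.map (Function.Embedding.subtype p) ∈ π ∧
      ∀ a ∈ C.map (Function.Embedding.subtype p), p a := by
  obtain ⟨B, hB, hBp, rfl⟩ := mem_restrictTo.1 hC
  rw [Finset.subtype_map, Finset.filter_true_of_mem hBp]
  exact ⟨hB, hBp⟩

theorem IsPartition.restrictTo (hπ : IsPartition π)
    (hp : ∀ B ∈ π, ∀ a ∈ B, p a → ∀ b ∈ B, p b) : IsPartition (restrictTo π p) := by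
  refine ⟨fun C hC => ?_, fun j => ?_⟩
  · obtain ⟨B, hB, hBp, rfl⟩ := mem_restrictTo.1 hC
    obtain ⟨a, ha⟩ := hπ.1 B hB
    exact ⟨⟨a, hBp a ha⟩, Finset.mem_subtype.2 ha⟩
  · obtain ⟨B, ⟨hB, hjB⟩, huniq⟩ := hπ.2 j.1
    refine ⟨B.subtype p, ⟨subtype_mem_restrictTo hB (hp B hB j hjB j.2),
      Finset.mem_subtype.2 hjB⟩, ?_⟩
    rintro C ⟨hC, hjC⟩
    obtain ⟨B', hB', -, rfl⟩ := mem_restrictTo.1 hC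
    rw [huniq B' ⟨hB', Finset.mem_subtype.1 hjC⟩]

theorem NoSingletons.restrictTo (hns : NoSingletons π) : NoSingletons (restrictTo π p) := by
  intro C hC
  obtain ⟨B, hB, hBp, rfl⟩ := mem_restrictTo.1 hC
  rw [Finset.card_subtype, Finset.filter_true_of_mem hBp]
  exact hns B hB

theorem NonCrossingG.restrictTo {lt : ι → ι → Prop} (hnc : NonCrossingG lt π) :
    NonCrossingG (fun a b : {a // p a} => lt a.1 b.1) (restrictTo π p) := by
  intro C₁ hC₁ C₂ hC₂ hne x₁ hx₁ y₁ hy₁ x₂ hx₂ y₂ hy₂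
  obtain ⟨B₁, hB₁, -, rfl⟩ := mem_restrictTo.1 hC₁
  obtain ⟨B₂, hB₂, -, rfl⟩ := mem_restrictTo.1 hC₂
  exact hnc B₁ hB₁ B₂ hB₂ (fun h => hne (h ▸ rfl)) _ (Finset.mem_subtype.1 hx₁) _
    (Finset.mem_subtype.1 hy₁) _ (Finset.mem_subtype.1 hx₂) _ (Finset.mem_subtype.1 hy₂)

theorem RespectsG.restrictTo {κ : Type*} {lbl : ι → κ} (hresp : RespectsG lbl π) :
    RespectsG (fun a : {a // p a} => lbl a.1) (restrictTo π p) := by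
  intro C hC a ha b hb hab
  obtain ⟨B, hB, -, rfl⟩ := mem_restrictTo.1 hC
  exact Subtype.ext (hresp B hB _ (Finset.mem_subtype.1 ha) _ (Finset.mem_subtype.1 hb) hab)

-- The decidability instance of the filter is left free: for a finite `ι` elaboration picks
-- `Fintype.decidableForallFintype` rather than the instance derived from `p`.
theorem ConnectsG.restrictTo {κ : Type*} {lbl : ι → κ} {S : Set κ}
    [DecidablePred fun B : Finset ι => ∀ a ∈ B, p a]
    (hconn : ConnectsG lbl (π.filter fun B => ∀ a ∈ B, p a) S) :
    ConnectsG (fun a : {a // p a} => lbl a.1) (restrictTo π p) S := by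
  refine fun i hi j hj => Relation.ReflTransGen.mono (fun x y => ?_) i j (hconn i hi j hj)
  rintro ⟨B, hBf, ⟨a, ha, rfl⟩, ⟨b, hb, rfl⟩⟩
  obtain ⟨hB, hBp⟩ := Finset.mem_filter.1 hBf
  exact ⟨B.subtype p, subtype_mem_restrictTo hB hBp,
    ⟨⟨a, hBp a ha⟩, Finset.mem_subtype.2 ha, rfl⟩, ⟨⟨b, hBp b hb⟩, Finset.mem_subtype.2 hb, rfl⟩⟩

theorem blockOf_restrictTo (hπ : IsPartition π) (hp : ∀ B ∈ π, ∀ a ∈ B, p a → ∀ b ∈ B, p b)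
    (a : {a // p a}) : blockOf (restrictTo π p) a = (blockOf π a.1).subtype p :=
  (hπ.restrictTo hp).blockOf_eq
    (subtype_mem_restrictTo (hπ.blockOf_mem a.1) (hp _ (hπ.blockOf_mem a.1) a.1
      (hπ.mem_blockOf a.1) a.2))
    (Finset.mem_subtype.2 (hπ.mem_blockOf a.1))

end restrictTo

theorem volume_restrict_orth (ι : Type*) [Fintype ι] :
    (volume : Measure (ι → ℝ)).restrict (orth ι) =
      Measure.pi fun _ : ι => (volume : Measure ℝ).restrict (Set.Ici 0) := by
  have : orth ι = Set.univ.pi fun _ => Set.Ici (0 : ℝ) := by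
    ext t
    simp only [orth, Set.mem_ofPred_eq, Set.mem_univ_pi, Set.mem_Ici]
  rw [this, volume_pi, Measure.restrict_pi_pi]

theorem measurePreserving_piCurry_symm {κ : Type*} [Fintype κ] {ι : κ → Type*}
    [∀ q, Fintype (ι q)] {X : ∀ q, ι q → Type*} [∀ q k, MeasurableSpace (X q k)]
    (μ : ∀ q k, Measure (X q k)) [∀ q k, SigmaFinite (μ q k)] :
    MeasurePreserving (MeasurableEquiv.piCurry X).symm
      (Measure.pi fun q => Measure.pi (μ q)) (Measure.pi fun p : Σ q, ι q => μ p.1 p.2) := by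
  refine ⟨(MeasurableEquiv.piCurry X).symm.measurable, (Measure.pi_eq fun s hs => ?_).symm⟩
  have hbox : (MeasurableEquiv.piCurry X).symm ⁻¹' Set.univ.pi s =
      Set.univ.pi fun q => Set.univ.pi fun k => s ⟨q, k⟩ := by
    ext w
    simp only [Set.mem_preimage, Set.mem_univ_pi]
    exact ⟨fun h q k => h ⟨q, k⟩, fun h p => h p.1 p.2⟩
  rw [MeasurableEquiv.map_apply, hbox, Measure.pi_pi]
  simp_rw [Measure.pi_pi]
  rw [← Finset.univ_sigma_univ, Finset.prod_sigma]

theorem integral_orth_comp_equiv {ι ι' E : Type*} [Fintype ι] [Fintype ι']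
    [NormedAddCommGroup E] [NormedSpace ℝ E] (e : ι' ≃ ι) (F : (ι → ℝ) → E) :
    ∫ y in orth ι, F y = ∫ z in orth ι', F fun i => z (e.symm i) := by
  rw [volume_restrict_orth, volume_restrict_orth,
    ← (measurePreserving_piCongrLeft (fun _ => (volume : Measure ℝ).restrict (Set.Ici 0))
      e).integral_comp']
  congr with z
  congr with i
  rw [MeasurableEquiv.coe_piCongrLeft, ← e.apply_symm_apply i, Equiv.piCongrLeft_apply_apply,
    e.symm_apply_apply]

theorem integral_orth_sigma_prod {𝕜 κ : Type*} [RCLike 𝕜] [Fintype κ] {ι : κ → Type*}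
    [∀ q, Fintype (ι q)] (g : ∀ q, (ι q → ℝ) → 𝕜) :
    ∫ w in orth (Σ q, ι q), ∏ q, g q (fun k => w ⟨q, k⟩) = ∏ q, ∫ z in orth (ι q), g q z := by
  simp only [volume_restrict_orth]
  rw [← (measurePreserving_piCurry_symm fun _ _ =>
    (volume : Measure ℝ).restrict (Set.Ici 0)).integral_comp']
  exact integral_fintype_prod_eq_prod g

theorem partInt_eq_integral_blockOf {ι E : Type*} [Fintype ι] [DecidableEq ι]
    [NormedAddCommGroup E] [NormedSpace ℝ E] {π : Finset (Finset ι)} (hπ : IsPartition π)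
    (f : (ι → ℝ) → E) :
    partInt π f = ∫ y in orth {B // B ∈ π}, f fun j => y ⟨blockOf π j, hπ.blockOf_mem j⟩ := by
  simp only [partInt, hπ.blockOf_mem, dite_true]

theorem forall_mem_of_mem_block {ι κ : Type*} {π : Finset (Finset ι)} {p : κ → ι → Prop}
    (hp : ∀ a, ∃! q, p q a) (hblk : ∀ B ∈ π, ∃ q, ∀ a ∈ B, p q a)
    (q : κ) : ∀ B ∈ π, ∀ a ∈ B, p q a → ∀ b ∈ B, p q b := by
  intro B hB a ha haq b hb
  obtain ⟨q', hq'⟩ := hblk B hB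
  rw [(hp a).unique haq (hq' a ha)]
  exact hq' b hb

section Factorization

variable {ι κ : Type*} [DecidableEq ι] {π : Finset (Finset ι)} {p : κ → ι → Prop}
  [∀ q, DecidablePred (p q)]

def sigmaRestrictToEquiv (hπ : IsPartition π) (hp : ∀ a, ∃! q, p q a)
    (hblk : ∀ B ∈ π, ∃ q, ∀ a ∈ B, p q a) :
    (Σ q, {C // C ∈ restrictTo π (p q)}) ≃ {B // B ∈ π} := by
  refine Equiv.ofBijective
    (fun x => ⟨x.2.1.map (Function.Embedding.subtype _),
      (map_subtype_mem_of_mem_restrictTo x.2.2).1⟩) ⟨?_, ?_⟩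
  · rintro ⟨q₁, C₁, hC₁⟩ ⟨q₂, C₂, hC₂⟩ h
    have hmap : C₁.map (Function.Embedding.subtype _) = C₂.map (Function.Embedding.subtype _) :=
      congrArg Subtype.val h
    obtain ⟨a, ha⟩ := (hπ.restrictTo (forall_mem_of_mem_block hp hblk q₁)).1 C₁ hC₁
    have ha₂ : p q₂ a.1 := (map_subtype_mem_of_mem_restrictTo hC₂).2 a.1
      (hmap ▸ Finset.mem_map_of_mem _ ha)
    obtain rfl : q₁ = q₂ := (hp a.1).unique a.2 ha₂
    obtain rfl : C₁ = C₂ := Finset.map_injective _ hmap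
    rfl
  · rintro ⟨B, hB⟩
    obtain ⟨q, hBq⟩ := hblk B hB
    refine ⟨⟨q, B.subtype (p q), subtype_mem_restrictTo hB hBq⟩, Subtype.ext ?_⟩
    exact (Finset.subtype_map _).trans (Finset.filter_true_of_mem hBq)

theorem sigmaRestrictToEquiv_symm_blockOf (hπ : IsPartition π) (hp : ∀ a, ∃! q, p q a)
    (hblk : ∀ B ∈ π, ∃ q, ∀ a ∈ B, p q a) (q : κ) (a : {a // p q a}) :
    (sigmaRestrictToEquiv hπ hp hblk).symm ⟨blockOf π a.1, hπ.blockOf_mem a.1⟩ =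
      ⟨q, blockOf (restrictTo π (p q)) a,
        (hπ.restrictTo (forall_mem_of_mem_block hp hblk q)).blockOf_mem a⟩ := by
  rw [Equiv.symm_apply_eq]
  refine Subtype.ext ?_
  change blockOf π a.1 = (blockOf (restrictTo π (p q)) a).map (Function.Embedding.subtype _)
  rw [blockOf_restrictTo hπ (forall_mem_of_mem_block hp hblk q), Finset.subtype_map,
    Finset.filter_true_of_mem]
  exact forall_mem_of_mem_block hp hblk q _ (hπ.blockOf_mem a.1) a.1 (hπ.mem_blockOf a.1) a.2

theorem partInt_prod_restrictTo {𝕜 : Type*} [RCLike 𝕜] [Fintype ι] [Fintype κ]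
    (hπ : IsPartition π) (hp : ∀ a, ∃! q, p q a) (hblk : ∀ B ∈ π, ∃ q, ∀ a ∈ B, p q a)
    (F : ∀ q, ({a // p q a} → ℝ) → 𝕜) :
    partInt π (fun t => ∏ q, F q fun a => t a.1) =
      ∏ q, partInt (restrictTo π (p q)) (F q) := by
  have hπq q := hπ.restrictTo (forall_mem_of_mem_block hp hblk q)
  let e := sigmaRestrictToEquiv hπ hp hblk
  calc partInt π (fun t => ∏ q, F q fun a => t a.1)
      = ∫ w in orth (Σ q, {C // C ∈ restrictTo π (p q)}),
          ∏ q, F q fun a => w (e.symm ⟨blockOf π a.1, hπ.blockOf_mem a.1⟩) := by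
        rw [partInt_eq_integral_blockOf hπ, integral_orth_comp_equiv e]
    _ = ∫ w in orth (Σ q, {C // C ∈ restrictTo π (p q)}),
          ∏ q, F q fun a => w ⟨q, blockOf (restrictTo π (p q)) a, (hπq q).blockOf_mem a⟩ := by
        simp only [e, sigmaRestrictToEquiv_symm_blockOf]
    _ = ∏ q, partInt (restrictTo π (p q)) (F q) := by
        simp only [partInt_eq_integral_blockOf (hπq _)]
        exact integral_orth_sigma_prod fun q (z : {C // C ∈ restrictTo π (p q)} → ℝ) =>
          F q fun a => z ⟨blockOf _ a, (hπq q).blockOf_mem a⟩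

end Factorization

theorem tensor_eq_prod_subTensor {r m : ℕ} {n : Fin r → ℕ} {I : Fin m → Finset (Fin r)}
    (hI : ∀ i, ∃! q, i ∈ I q) (f : ∀ i : Fin r, (Fin (n i) → ℝ) → ℂ) :
    tensor f = fun t => ∏ q, subTensor I q f fun a => t a.1 := by
  choose c hc hcu using hI
  have hfiber q : Finset.univ.filter (fun i => c i = q) = I q := by
    ext i
    simpa using ⟨fun h => h ▸ hc i, fun h => (hcu i q h).symm⟩
  funext t
  rw [tensor, ← Finset.prod_fiberwise Finset.univ c]
  refine Finset.prod_congr rfl fun q _ => ?_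
  rw [hfiber q, subTensor, ← Finset.prod_attach (I q)]

theorem partInt_factorizes_over_connected_components_general
    (r : ℕ) (n : Fin r → ℕ)
    (π : Finset (Finset (MIdx n)))
    (hpart : IsPartition π) (hns : NoSingletons π) (hnc : NonCrossing π) (hresp : Respects π)
    (m : ℕ) (I : Fin m → Finset (Fin r))
    (hcover : ∀ i : Fin r, ∃! q, i ∈ I q)
    (hblk : ∀ B ∈ π, ∃ q, ∀ a ∈ B, a.1 ∈ I q)
    (hconn : ∀ q, ConnectsG Sigma.fst
      (π.filter (fun B => ∀ a ∈ B, a.1 ∈ I q)) (↑(I q) : Set (Fin r))) :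
    (∀ q : Fin m,
      IsPartition (restrictPart π (I q)) ∧
      NoSingletons (restrictPart π (I q)) ∧
      NonCrossingG (fun a b : {a : MIdx n // a.1 ∈ I q} => mlt a.1 b.1)
        (restrictPart π (I q)) ∧
      RespectsG (fun a : {a : MIdx n // a.1 ∈ I q} => a.1.1) (restrictPart π (I q)) ∧
      ConnectsG (fun a : {a : MIdx n // a.1 ∈ I q} => a.1.1) (restrictPart π (I q))
        (↑(I q) : Set (Fin r))) ∧
    ∀ f : ∀ i : Fin r, (Fin (n i) → ℝ) → ℂ,
      (∀ i, Measurable (f i)) → (∀ i, BddBddSupp (f i)) →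
      partInt π (tensor f) = ∏ q : Fin m, partInt (restrictPart π (I q)) (subTensor I q f) := by
  have hcover_fst : ∀ a : MIdx n, ∃! q, a.1 ∈ I q := fun a => hcover a.1
  simp only [restrictPart_eq_restrictTo]
  refine ⟨fun q => ⟨hpart.restrictTo (forall_mem_of_mem_block hcover_fst hblk q), hns.restrictTo,
    hnc.restrictTo, hresp.restrictTo, (hconn q).restrictTo⟩, fun f _ _ => ?_⟩
  rw [tensor_eq_prod_subTensor hcover]
  exact partInt_prod_restrictTo hpart hcover_fst hblk _

/-- a non-crossing respecting partition without singletons decomposes into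
its connected components, each component restriction is a non-crossing respecting connected
partition without singletons, and the partition integral factorizes accordingly. -/
theorem partInt_factorizes_over_connected_components
    (r : ℕ) (hr : 1 ≤ r) (n : Fin r → ℕ) (hn : ∀ i, 1 ≤ n i)
    (π : Finset (Finset (MIdx n)))
    (hpart : IsPartition π) (hns : NoSingletons π) (hnc : NonCrossing π) (hresp : Respects π)
    (m : ℕ) (I : Fin m → Finset (Fin r))
    (hne : ∀ q, (I q).Nonempty)
    (hcover : ∀ i : Fin r, ∃! q, i ∈ I q)
    (hblk : ∀ B ∈ π, ∃ q, ∀ a ∈ B, a.1 ∈ I q)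
    (hconn : ∀ q, ConnectsG Sigma.fst
      (π.filter (fun B => ∀ a ∈ B, a.1 ∈ I q)) (↑(I q) : Set (Fin r))) :
    (∀ q : Fin m,
      IsPartition (restrictPart π (I q)) ∧
      NoSingletons (restrictPart π (I q)) ∧
      NonCrossingG (fun a b : {a : MIdx n // a.1 ∈ I q} => mlt a.1 b.1)
        (restrictPart π (I q)) ∧
      RespectsG (fun a : {a : MIdx n // a.1 ∈ I q} => a.1.1) (restrictPart π (I q)) ∧
      ConnectsG (fun a : {a : MIdx n // a.1 ∈ I q} => a.1.1) (restrictPart π (I q))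
        (↑(I q) : Set (Fin r))) ∧
    ∀ f : ∀ i : Fin r, (Fin (n i) → ℝ) → ℂ,
      (∀ i, Measurable (f i)) → (∀ i, BddBddSupp (f i)) →
      partInt π (tensor f) = ∏ q : Fin m, partInt (restrictPart π (I q)) (subTensor I q f) :=
  partInt_factorizes_over_connected_components_general r n π hpart hns hnc hresp m I hcover hblk
    hconn
end
end

section
/- Let r ≥ 2 and let n₁,…,n_r ≥ 1 be integers with n = n₁+⋯+n_r. Let π be a non-crossing partition of [n] without singleton blocks that respects the interval partition n₁⊗⋯⊗n_r with blocks B₁,…,B_r. Then there exist an index s ∈ {1,…,r−1} and a block V of π that contains both the last element of B_s and the first element of B_{s+1}, i.e. both n₁+⋯+n_s and n₁+⋯+n_s+1 belong to V. -/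
open MeasureTheory Filter Finset Topology
open scoped ENNReal

noncomputable section

/-! Among the pairs `a < b` lying in a common block, take one with the fewest elements strictly
between them. If some `c` lies strictly between `a` and `b`, its block differs from that of `a`
and `b` (otherwise `a, c` is a closer pair) and contains a second element `c'`; non-crossing puts
`c'` strictly between `a` and `b` too, so `c, c'` is a closer pair. Hence `a` and `b` are
adjacent. Respecting the intervals puts them in different intervals, and as no interval is
empty, `a` is the last element of its interval and `b` the first of the next one. -/

theorem IsPartition.eq_of_mem {ι : Type*} {π : Finset (Finset ι)} (hπ : IsPartition π)
    {B B' : Finset ι} (hB : B ∈ π) (hB' : B' ∈ π) {x : ι} (hx : x ∈ B) (hx' : x ∈ B') :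
    B = B' :=
  (hπ.2 x).unique ⟨hB, hx⟩ ⟨hB', hx'⟩

section Between

variable {ι : Type*} {lt : ι → ι → Prop}

theorem rel_of_not_rel_of_rel [IsStrictTotalOrder ι lt] {a x y : ι} (hxa : ¬ lt x a)
    (hxy : lt x y) : lt a y := by
  rcases trichotomous_of lt a x with hax | rfl | hxa'
  · exact _root_.trans hax hxy
  · exact hxy
  · exact absurd hxa' hxa

variable [Fintype ι]

open scoped Classical in
def between (lt : ι → ι → Prop) (a b : ι) : Finset ι :=
  Finset.univ.filter fun c => lt a c ∧ lt c b

theorem mem_between {a b c : ι} : c ∈ between lt a b ↔ lt a c ∧ lt c b := by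
  simp [between]

variable [IsStrictTotalOrder ι lt]

theorem card_between_lt_card_between {a b x y : ι} (hxa : ¬ lt x a) (hxy : lt x y)
    (hyb : lt y b) : (between lt x y).card < (between lt a b).card := by
  refine Finset.card_lt_card ⟨fun c hc => ?_, fun hsub => ?_⟩
  · rw [mem_between] at hc ⊢
    exact ⟨rel_of_not_rel_of_rel hxa hc.1, _root_.trans hc.2 hyb⟩
  · have hy : y ∈ between lt a b := mem_between.2 ⟨rel_of_not_rel_of_rel hxa hxy, hyb⟩
    exact irrefl y (mem_between.1 (hsub hy)).2

end Between

namespace NonCrossingG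

variable {ι : Type*} [Fintype ι] {lt : ι → ι → Prop} [IsStrictTotalOrder ι lt]
  {π : Finset (Finset ι)}

theorem exists_adjacent_pair_of_mem (hnc : NonCrossingG lt π) (hπ : IsPartition π)
    (hns : NoSingletons π) {B : Finset ι} (hB : B ∈ π) {a b : ι} (ha : a ∈ B) (hb : b ∈ B)
    (hab : lt a b) :
    ∃ V ∈ π, ∃ x ∈ V, ∃ y ∈ V, lt x y ∧ ∀ c, ¬ (lt x c ∧ lt c y) := by
  induction hk : (between lt a b).card using Nat.strong_induction_on generalizing B a b with
  | _ k ih =>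
  subst hk
  by_cases hgap : ∃ c, lt a c ∧ lt c b
  swap
  · exact ⟨B, hB, a, ha, b, hb, hab, fun c hc => hgap ⟨c, hc⟩⟩
  obtain ⟨c, hac, hcb⟩ := hgap
  obtain ⟨B', ⟨hB', hcB'⟩, -⟩ := hπ.2 c
  by_cases hBB' : B' = B
  · subst hBB'
    exact ih _ (card_between_lt_card_between (irrefl a) hac hcb) hB ha hcB' hac rfl
  obtain ⟨c', hc'B', hc'c⟩ := Finset.exists_mem_ne (hns B' hB') c
  have hc'a : c' ≠ a := fun h => hBB' (hπ.eq_of_mem hB' hB hc'B' (h ▸ ha))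
  have hc'b : c' ≠ b := fun h => hBB' (hπ.eq_of_mem hB' hB hc'B' (h ▸ hb))
  rcases trichotomous_of lt c' a with hc'a' | rfl | hac'
  · exact (hnc B' hB' B hB hBB' c' hc'B' c hcB' a ha b hb ⟨hc'a', hac, hcb⟩).elim
  · exact absurd rfl hc'a
  rcases trichotomous_of lt c' b with hc'b' | rfl | hbc'
  · rcases trichotomous_of lt c c' with hcc' | rfl | hc'c''
    · exact ih _ (card_between_lt_card_between (asymm hac) hcc' hc'b') hB' hcB' hc'B' hcc' rfl
    · exact absurd rfl hc'c
    · exact ih _ (card_between_lt_card_between (asymm hac') hc'c'' hcb) hB' hc'B' hcB'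
        hc'c'' rfl
  · exact absurd rfl hc'b
  · exact (hnc B hB B' hB' (Ne.symm hBB') a ha b hb c hcB' c' hc'B' ⟨hac, hcb, hbc'⟩).elim

theorem exists_adjacent_pair [Nonempty ι] (hnc : NonCrossingG lt π) (hπ : IsPartition π)
    (hns : NoSingletons π) :
    ∃ V ∈ π, ∃ x ∈ V, ∃ y ∈ V, lt x y ∧ ∀ c, ¬ (lt x c ∧ lt c y) := by
  obtain ⟨j⟩ := ‹Nonempty ι›
  obtain ⟨B, ⟨hB, hjB⟩, -⟩ := hπ.2 j
  obtain ⟨k, hkB, hkj⟩ := Finset.exists_mem_ne (hns B hB) j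
  rcases trichotomous_of lt j k with hjk | rfl | hkj'
  · exact hnc.exists_adjacent_pair_of_mem hπ hns hB hjB hkB hjk
  · exact absurd rfl hkj
  · exact hnc.exists_adjacent_pair_of_mem hπ hns hB hkB hjB hkj'

end NonCrossingG

instance {r : ℕ} {n : Fin r → ℕ} : IsStrictTotalOrder (MIdx n) mlt where
  trichotomous a b hab hba := by
    obtain ⟨i, j⟩ := a
    obtain ⟨k, l⟩ := b
    simp only [mlt, not_or, not_and, not_lt] at hab hba
    obtain rfl : i = k := le_antisymm hba.1 hab.1
    obtain rfl : j = l := Fin.ext (le_antisymm (hba.2 rfl) (hab.2 rfl))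
    rfl
  irrefl a h := by
    rcases h with h | ⟨-, h⟩ <;> exact lt_irrefl _ h
  trans a b c := by
    simp only [mlt]
    omega

theorem MIdx.boundary_pair_of_adjacent {r : ℕ} {n : Fin r → ℕ} (hn : ∀ i, 1 ≤ n i)
    {a b : MIdx n} (hab : a.1 < b.1) (hadj : ∀ c, ¬ (mlt a c ∧ mlt c b)) :
    (a.2 : ℕ) + 1 = n a.1 ∧ (b.1 : ℕ) = a.1 + 1 ∧ (b.2 : ℕ) = 0 := by
  have hab' : (a.1 : ℕ) < b.1 := hab
  refine ⟨?_, ?_, ?_⟩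
  · by_contra h
    have hnext : (a.2 : ℕ) + 1 < n a.1 := by omega
    exact hadj ⟨a.1, ⟨a.2 + 1, hnext⟩⟩ ⟨Or.inr ⟨rfl, Nat.lt_succ_self _⟩, Or.inl hab⟩
  · by_contra h
    have hmid : (a.1 : ℕ) + 1 < r := by omega
    exact hadj ⟨⟨a.1 + 1, hmid⟩, ⟨0, hn _⟩⟩
      ⟨Or.inl (Fin.lt_def.2 (Nat.lt_succ_self _)), Or.inl (Fin.lt_def.2 (by simp; omega))⟩
  · by_contra h
    exact hadj ⟨b.1, ⟨0, hn _⟩⟩ ⟨Or.inl hab, Or.inr ⟨rfl, Nat.pos_of_ne_zero h⟩⟩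

/-- a non-crossing partition without singletons respecting the interval
partition contains a block with the last element of some `B_s` and the first element of
`B_{s+1}`. -/
theorem exists_block_linking_adjacent_intervals
    (r : ℕ) (hr : 2 ≤ r) (n : Fin r → ℕ) (hn : ∀ i, 1 ≤ n i)
    (π : Finset (Finset (MIdx n)))
    (hpart : IsPartition π) (hns : NoSingletons π) (hnc : NonCrossing π)
    (hresp : Respects π) :
    ∃ s t : Fin r, (t : ℕ) = (s : ℕ) + 1 ∧
      ∃ V ∈ π, ∃ a ∈ V, ∃ b ∈ V,
        a.1 = s ∧ ((a.2 : ℕ) + 1 = n s) ∧ b.1 = t ∧ (b.2 : ℕ) = 0 := by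
  have : Nonempty (MIdx n) := ⟨⟨⟨0, by omega⟩, ⟨0, hn _⟩⟩⟩
  obtain ⟨V, hV, a, ha, b, hb, hab, hadj⟩ := NonCrossingG.exists_adjacent_pair hnc hpart hns
  have hfst : a.1 < b.1 := by
    rcases hab with hlt | ⟨heq, hlt⟩
    · exact hlt
    · cases hresp V hV a ha b hb heq
      exact absurd hlt (lt_irrefl _)
  obtain ⟨hlast, hsucc, hfirst⟩ := MIdx.boundary_pair_of_adjacent hn hfst hadj
  exact ⟨a.1, b.1, hsucc, V, hV, a, ha, b, hb, rfl, hlast, rfl, hfirst⟩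
end
end

section
/- Let r ≥ 2 and let n₁,…,n_r ≥ 1 be integers with n = n₁+⋯+n_r. Let π be a non-crossing partition of [n] that respects the interval partition n₁⊗⋯⊗n_r with blocks B₁,…,B_r. Then for every s ∈ {1,…,r−1}, there is at most one block of π of cardinality strictly greater than two that links B_s and B_{s+1} (i.e. contains at least one element of B_s and at least one element of B_{s+1}). -/
open MeasureTheory Filter Finset Topology
open scoped ENNReal

noncomputable section

/-! Each of two big blocks linking `B_s` and `B_{s+1}` has a third element, which, the
partition being respecting, lies outside `B_s ∪ B_{s+1}`. If the blocks are distinct, their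
points in `B_s` differ; the later one lies strictly between the two linking points of the other
block, and the third element of the later block then closes a crossing. -/

lemma IsPartition.eq_of_mem_of_mem {ι : Type*} {π : Finset (Finset ι)} (h : IsPartition π)
    {V W : Finset ι} (hV : V ∈ π) (hW : W ∈ π) {j : ι} (hjV : j ∈ V) (hjW : j ∈ W) : V = W :=
  (h.2 j).unique ⟨hV, hjV⟩ ⟨hW, hjW⟩

lemma RespectsG.exists_mem_label_ne_ne {ι κ : Type*} {lbl : ι → κ} {π : Finset (Finset ι)}
    (h : RespectsG lbl π) {V : Finset ι} (hV : V ∈ π) (hcard : 3 ≤ V.card) (i j : κ) :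
    ∃ c ∈ V, lbl c ≠ i ∧ lbl c ≠ j := by
  classical
  have hinj : Set.InjOn lbl V := fun a ha b hb hab => h V hV a ha b hb hab
  have hnot : ¬ V.image lbl ⊆ {i, j} := fun hsub => by
    have hle := card_le_card hsub
    rw [card_image_of_injOn hinj] at hle
    have := card_le_two (a := i) (b := j)
    omega
  obtain ⟨k, hk, hkij⟩ := not_subset.mp hnot
  obtain ⟨c, hc, rfl⟩ := mem_image.mp hk
  simp only [mem_insert, mem_singleton, not_or] at hkij
  exact ⟨c, hc, hkij⟩

lemma mlt_trichotomous {r : ℕ} {n : Fin r → ℕ} (a b : MIdx n) : mlt a b ∨ a = b ∨ mlt b a := by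
  obtain ⟨i, x⟩ := a
  obtain ⟨j, y⟩ := b
  rcases lt_trichotomy i j with hij | rfl | hij
  · exact Or.inl (Or.inl hij)
  · rcases lt_trichotomy (x : ℕ) y with hxy | hxy | hxy
    · exact Or.inl (Or.inr ⟨rfl, hxy⟩)
    · exact Or.inr (Or.inl (by rw [Fin.ext hxy]))
    · exact Or.inr (Or.inr (Or.inr ⟨rfl, hxy⟩))
  · exact Or.inr (Or.inr (Or.inl hij))

lemma NonCrossing.eq_of_mem_between {r : ℕ} {n : Fin r → ℕ} {π : Finset (Finset (MIdx n))}
    (hnc : NonCrossing π) {V W : Finset (MIdx n)} (hV : V ∈ π) (hW : W ∈ π)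
    {a b x c : MIdx n} (ha : a ∈ V) (hb : b ∈ V) (hx : x ∈ W) (hc : c ∈ W)
    (hax : mlt a x) (hxb : mlt x b) (hc_out : c.1 < a.1 ∨ b.1 < c.1) : V = W := by
  by_contra hne
  rcases hc_out with hca | hbc
  · exact hnc W hW V hV (Ne.symm hne) c hc x hx a ha b hb ⟨Or.inl hca, hax, hxb⟩
  · exact hnc V hV W hW hne a ha b hb x hx c hc ⟨hax, hxb, Or.inl hbc⟩

theorem atMostOne_bigBlock_linking_adjacent_intervals_general
    (r : ℕ) (n : Fin r → ℕ)
    (π : Finset (Finset (MIdx n)))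
    (hpart : IsPartition π) (hnc : NonCrossing π) (hresp : Respects π) :
    ∀ s t : Fin r, (t : ℕ) = (s : ℕ) + 1 →
      ∀ V₁ ∈ π, ∀ V₂ ∈ π, 3 ≤ V₁.card → 3 ≤ V₂.card →
        (∃ a ∈ V₁, a.1 = s) → (∃ b ∈ V₁, b.1 = t) →
        (∃ a ∈ V₂, a.1 = s) → (∃ b ∈ V₂, b.1 = t) →
        V₁ = V₂ := by
  intro s t hst V₁ hV₁ V₂ hV₂ hcard₁ hcard₂ ⟨a₁, ha₁, ha₁s⟩ ⟨b₁, hb₁, hb₁t⟩ ⟨a₂, ha₂, ha₂s⟩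
    ⟨b₂, hb₂, hb₂t⟩
  have hs_lt_t : s < t := by rw [Fin.lt_def]; omega
  have outside {c : MIdx n} (hcs : c.1 ≠ s) (hct : c.1 ≠ t) : c.1 < s ∨ t < c.1 := by
    have := Fin.val_ne_of_ne hcs
    have := Fin.val_ne_of_ne hct
    rw [Fin.lt_def, Fin.lt_def]
    omega
  obtain ⟨c₁, hc₁, hc₁s, hc₁t⟩ := hresp.exists_mem_label_ne_ne hV₁ hcard₁ s t
  obtain ⟨c₂, hc₂, hc₂s, hc₂t⟩ := hresp.exists_mem_label_ne_ne hV₂ hcard₂ s t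
  rcases mlt_trichotomous a₁ a₂ with h | rfl | h
  · refine hnc.eq_of_mem_between hV₁ hV₂ ha₁ hb₁ ha₂ hc₂ h (Or.inl ?_) ?_
    · rwa [ha₂s, hb₁t]
    · rw [ha₁s, hb₁t]; exact outside hc₂s hc₂t
  · exact hpart.eq_of_mem_of_mem hV₁ hV₂ ha₁ ha₂
  · refine (hnc.eq_of_mem_between hV₂ hV₁ ha₂ hb₂ ha₁ hc₁ h (Or.inl ?_) ?_).symm
    · rwa [ha₁s, hb₂t]
    · rw [ha₂s, hb₂t]; exact outside hc₁s hc₁t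

/-- in a non-crossing partition respecting the interval partition, at most
one block of cardinality `> 2` links two given adjacent interval blocks. -/
theorem atMostOne_bigBlock_linking_adjacent_intervals
    (r : ℕ) (hr : 2 ≤ r) (n : Fin r → ℕ) (hn : ∀ i, 1 ≤ n i)
    (π : Finset (Finset (MIdx n)))
    (hpart : IsPartition π) (hnc : NonCrossing π) (hresp : Respects π) :
    ∀ s t : Fin r, (t : ℕ) = (s : ℕ) + 1 →
      ∀ V₁ ∈ π, ∀ V₂ ∈ π, 3 ≤ V₁.card → 3 ≤ V₂.card →
        (∃ a ∈ V₁, a.1 = s) → (∃ b ∈ V₁, b.1 = t) →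
        (∃ a ∈ V₂, a.1 = s) → (∃ b ∈ V₂, b.1 = t) →
        V₁ = V₂ :=
  atMostOne_bigBlock_linking_adjacent_intervals_general r n π hpart hnc hresp
end
end

section
/- Let n, m ≥ 1 and let f ∈ L²(ℝ₊ⁿ) and g ∈ L²(ℝ₊ᵐ) be mirror-symmetric functions that are bounded with bounded support. Let p ∈ {0,1} and ℓ ≥ 0 be integers with 1 ≤ ℓ+p ≤ min(n,m) and ℓ ≤ min(n,m) − p. Then the squared L²(ℝ₊^{n+m−2ℓ−p}) norm of f ⋆_{ℓ+p}^{ℓ} g equals the L²(ℝ₊^{2ℓ+p}) inner product of f ⋆_{n−ℓ}^{n−ℓ−p} f and g ⋆_{m−ℓ}^{m−ℓ−p} g; that is, ‖f ⋆_{ℓ+p}^{ℓ} g‖²_{L²(ℝ₊^{n+m−2ℓ−p})} = ⟨f ⋆_{n−ℓ}^{n−ℓ−p} f, g ⋆_{m−ℓ}^{m−ℓ−p} g⟩_{L²(ℝ₊^{2ℓ+p})}. -/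
open MeasureTheory Filter Finset Topology
open scoped ENNReal

noncomputable section

/-!
Expanding the squares, both sides become integrals over `ℝ₊^{n+m-p}` of products of two values
of `f` and two of `g`, two of the four conjugated. Writing `r ∈ ℝ₊^p` for the identified
variables, the left integrand is `f(α,r,s) g(rev s,r,β) conj (f(α,r,s') g(rev s',r,β))` and the
right one `f(σ,r,v) f(rev v,r,σ') conj (g(σ,r,w) g(rev w,r,σ'))`. Mirror symmetry removes one
conjugation of `f` on the left and one of `g` on the right, after which the substitution
`σ = rev s'`, `σ' = s`, `v = rev α`, `w = β`, a permutation of coordinates, turns one integrand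
into the other. Boundedness with bounded support makes both integrands integrable, which
justifies Fubini.
-/

open Function
open scoped ComplexConjugate

abbrev volOrth (ι : Type*) [Fintype ι] : Measure (ι → ℝ) :=
  Measure.pi fun _ => volume.restrict (Set.Ici 0)

lemma volume_restrict_orth_s8 (ι : Type*) [Fintype ι] :
    volume.restrict (orth ι) = volOrth ι := by
  have hpi : orth ι = Set.pi Set.univ fun _ => Set.Ici 0 := by
    ext; simp only [orth, Set.mem_ofPred_eq, Set.mem_pi, Set.mem_univ, Set.mem_Ici, true_implies]
  rw [hpi, volume_pi]
  refine (Measure.pi_eq fun s hs => ?_).symm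
  rw [Measure.restrict_apply (.univ_pi hs), ← Set.pi_inter_distrib, Measure.pi_pi]
  simp [Measure.restrict_apply (hs _)]

lemma measurePreserving_piCongrLeft_const {ι κ : Type*} [Fintype ι] [Fintype κ]
    (e : ι ≃ κ) : MeasurePreserving (MeasurableEquiv.piCongrLeft (fun _ => ℝ) e)
      (volOrth ι) (volOrth κ) :=
  measurePreserving_piCongrLeft (fun _ => volume.restrict (Set.Ici 0)) e

def appendEquiv {a b N : ℕ} (h : a + b = N) : ((Fin a → ℝ) × (Fin b → ℝ)) ≃ᵐ (Fin N → ℝ) :=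
  (MeasurableEquiv.sumPiEquivProdPi fun _ => ℝ).symm.trans
    (MeasurableEquiv.piCongrLeft (fun _ => ℝ) (finSumFinEquiv.trans (finCongr h)))

lemma measurePreserving_appendEquiv {a b N : ℕ} (h : a + b = N) :
    MeasurePreserving (appendEquiv h) ((volOrth (Fin a)).prod (volOrth (Fin b)))
      (volOrth (Fin N)) :=
  (measurePreserving_piCongrLeft_const _).comp
    (measurePreserving_sumPiEquivProdPi_symm fun _ => volume.restrict (Set.Ici 0))

lemma ext_appendEquiv {a b N : ℕ} (h : a + b = N) (x : Fin a → ℝ) (y : Fin b → ℝ) (j : ℕ) :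
    ext (appendEquiv h (x, y)) j = if j < a then ext x j else ext y (j - a) := by
  have happ : ∀ i, appendEquiv h (x, y) (finCongr h (finSumFinEquiv i)) = Sum.elim x y i :=
    fun i => by
      simp only [appendEquiv, MeasurableEquiv.trans_apply]
      exact MeasurableEquiv.piCongrLeft_apply_apply (β := fun _ => ℝ) _ _ i
  unfold _root_.ext
  by_cases hja : j < a
  · have := happ (.inl ⟨j, hja⟩)
    simp only [finSumFinEquiv_apply_left, Sum.elim_inl] at this
    rw [dif_pos (by omega), if_pos hja, dif_pos hja, ← this]; rfl
  · rw [if_neg hja]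
    by_cases hjN : j < N
    · have := happ (.inr ⟨j - a, by omega⟩)
      simp only [finSumFinEquiv_apply_right, Sum.elim_inr] at this
      rw [dif_pos hjN, dif_pos (by omega), ← this]
      exact congrArg _ <| Fin.ext <| by
        simp only [finCongr_apply, Fin.val_cast, Fin.val_natAdd]; omega
    · rw [dif_neg hjN, dif_neg (by omega)]

lemma integral_appendEquiv₃ {E : Type*} [NormedAddCommGroup E] [NormedSpace ℝ E]
    {K a b N : ℕ} (h : K + (a + b) = N) {Φ : (Fin N → ℝ) → E}
    (hΦ : Integrable Φ (volOrth (Fin N))) :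
    ∫ t, ∫ s, ∫ s', Φ (appendEquiv h (t, appendEquiv rfl (s, s')))
        ∂volOrth (Fin b) ∂volOrth (Fin a) ∂volOrth (Fin K) = ∫ x, Φ x ∂volOrth (Fin N) := by
  let e := (MeasurableEquiv.prodCongr (.refl _) (appendEquiv (a := a) (b := b) rfl)).trans
    (appendEquiv h)
  have he : MeasurePreserving e ((volOrth (Fin K)).prod ((volOrth (Fin a)).prod (volOrth (Fin b))))
      (volOrth (Fin N)) :=
    (measurePreserving_appendEquiv h).comp
      ((MeasurePreserving.id _).prod (measurePreserving_appendEquiv rfl))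
  have hΦe : Integrable (fun z => Φ (e z)) _ := (he.integrable_comp_emb e.measurableEmbedding).2 hΦ
  rw [← he.integral_comp' Φ, integral_prod _ hΦe]
  refine integral_congr_ae ?_
  filter_upwards [hΦe.prod_right_ae] with t ht
  exact (integral_prod _ ht).symm

lemma quasiMeasurePreserving_comp_of_injective {ι κ : Type*} [Fintype ι] [Fintype κ]
    {τ : ι → κ} (hτ : Injective τ) :
    Measure.QuasiMeasurePreserving (fun (x : κ → ℝ) j => x (τ j)) (volOrth κ) (volOrth ι) := by
  classical
  let e : {i // ∃ j, τ j = i} ≃ ι := (Equiv.ofInjective τ hτ).symm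
  have hsplit := measurePreserving_piEquivPiSubtypeProd
    (fun _ : κ => volume.restrict (Set.Ici (0 : ℝ))) (fun i => ∃ j, τ j = i)
  have hcomp := (measurePreserving_piCongrLeft_const e).quasiMeasurePreserving.comp
    (Measure.quasiMeasurePreserving_fst.comp hsplit.quasiMeasurePreserving)
  convert hcomp using 1
  funext x j
  change x (τ j) = MeasurableEquiv.piCongrLeft (fun _ => ℝ) e (fun i => x i) j
  conv_rhs => rw [← e.apply_symm_apply j, MeasurableEquiv.piCongrLeft_apply_apply (β := fun _ => ℝ)]
  rfl

lemma integral_comp_injective {E : Type*} [NormedAddCommGroup E] [NormedSpace ℝ E]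
    {ι : Type*} [Fintype ι] {π : ι → ι} (hπ : Injective π) (Φ : (ι → ℝ) → E) :
    ∫ x, Φ (fun i => x (π i)) ∂volOrth ι = ∫ x, Φ x ∂volOrth ι := by
  let e := Equiv.ofBijective π (Finite.injective_iff_bijective.1 hπ)
  have he : ∀ x : ι → ℝ, MeasurableEquiv.piCongrLeft (fun _ => ℝ) e.symm x = fun i => x (π i) :=
    fun x => funext fun i => by
      simpa [e] using MeasurableEquiv.piCongrLeft_apply_apply (β := fun _ => ℝ) e.symm x (π i)
  simp_rw [← he]
  exact (measurePreserving_piCongrLeft_const e.symm).integral_comp' Φ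

def sel {n N : ℕ} (τ : ℕ → ℕ) (x : Fin N → ℝ) : Fin n → ℝ := fun j => ext x (τ j)

section Sel

variable {n N : ℕ} {τ : ℕ → ℕ}

lemma sel_eq (hτ : Set.MapsTo τ (Set.Iio n) (Set.Iio N)) (x : Fin N → ℝ) :
    (sel τ x : Fin n → ℝ) = fun j : Fin n => x ⟨τ j, hτ j.2⟩ :=
  funext fun _ => dif_pos _

lemma sel_congr {τ' : ℕ → ℕ} (h : Set.EqOn τ τ' (Set.Iio n)) (x : Fin N → ℝ) :
    (sel τ x : Fin n → ℝ) = sel τ' x :=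
  funext fun j => by rw [sel, sel, h j.2]

lemma sel_sel_of_eqOn {n N M : ℕ} {τ π τ' : ℕ → ℕ} (hτ : Set.MapsTo τ (Set.Iio n) (Set.Iio N))
    (h : Set.EqOn (π ∘ τ) τ' (Set.Iio n)) (x : Fin M → ℝ) :
    (sel τ (sel π x : Fin N → ℝ) : Fin n → ℝ) = sel τ' x := by
  rw [← sel_congr h, sel_eq hτ]
  rfl

lemma sel_rev (x : Fin N → ℝ) :
    (fun i : Fin n => sel τ x i.rev) = sel (fun j => τ (n - 1 - j)) x :=
  funext fun i => by simp only [sel, Fin.val_rev]; congr 2; omega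

lemma quasiMeasurePreserving_sel (hmaps : Set.MapsTo τ (Set.Iio n) (Set.Iio N))
    (hinj : Set.InjOn τ (Set.Iio n)) :
    Measure.QuasiMeasurePreserving (sel τ : (Fin N → ℝ) → Fin n → ℝ)
      (volOrth (Fin N)) (volOrth (Fin n)) := by
  have := quasiMeasurePreserving_comp_of_injective
    (τ := fun j : Fin n => (⟨τ j, hmaps j.2⟩ : Fin N))
    fun i j hij => Fin.ext (hinj i.2 j.2 (congrArg Fin.val hij))
  exact (funext (sel_eq hmaps) : (sel τ : (Fin N → ℝ) → Fin n → ℝ) = _) ▸ this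

lemma integral_comp_sel {E : Type*} [NormedAddCommGroup E] [NormedSpace ℝ E] {π : ℕ → ℕ}
    (hmaps : Set.MapsTo π (Set.Iio N) (Set.Iio N)) (hinj : Set.InjOn π (Set.Iio N))
    (Φ : (Fin N → ℝ) → E) :
    ∫ x, Φ (sel π x) ∂volOrth (Fin N) = ∫ x, Φ x ∂volOrth (Fin N) := by
  simp_rw [sel_eq hmaps]
  exact integral_comp_injective (fun i j hij => Fin.ext (hinj i.2 j.2 (congrArg Fin.val hij))) Φ

end Sel

def BddSuppOn {N : ℕ} (Φ : (Fin N → ℝ) → ℂ) (S : Set ℕ) : Prop :=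
  (∃ C, ∀ x, ‖Φ x‖ ≤ C) ∧ ∃ R, ∀ x, Φ x ≠ 0 → ∀ i ∈ S, |ext x i| ≤ R

section BddSuppOn

variable {N : ℕ} {Φ Ψ : (Fin N → ℝ) → ℂ} {S T : Set ℕ}

lemma BddBddSupp.bddSuppOn_sel {n : ℕ} {φ : (Fin n → ℝ) → ℂ} (h : BddBddSupp φ) (τ : ℕ → ℕ) :
    BddSuppOn (fun x : Fin N → ℝ => φ (sel τ x)) (τ '' Set.Iio n) := by
  obtain ⟨⟨C, hC⟩, R, hR⟩ := h
  refine ⟨⟨C, fun x => hC _⟩, R, ?_⟩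
  rintro x hx _ ⟨j, hj, rfl⟩
  exact hR _ hx ⟨j, hj⟩

lemma BddSuppOn.mono (h : BddSuppOn Φ S) (hTS : T ⊆ S) : BddSuppOn Φ T :=
  ⟨h.1, h.2.imp fun _ hR x hx i hi => hR x hx i (hTS hi)⟩

lemma BddSuppOn.mul (hΦ : BddSuppOn Φ S) (hΨ : BddSuppOn Ψ T) :
    BddSuppOn (fun x => Φ x * Ψ x) (S ∪ T) := by
  obtain ⟨⟨C, hC⟩, R, hR⟩ := hΦ
  obtain ⟨⟨D, hD⟩, R', hR'⟩ := hΨ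
  refine ⟨⟨C * D, fun x => ?_⟩, max R R', fun x hx i hi => ?_⟩
  · rw [norm_mul]
    exact mul_le_mul (hC x) (hD x) (norm_nonneg _) ((norm_nonneg _).trans (hC x))
  · obtain ⟨hΦx, hΨx⟩ := mul_ne_zero_iff.1 hx
    rcases hi with hi | hi
    · exact (hR x hΦx i hi).trans (le_max_left _ _)
    · exact (hR' x hΨx i hi).trans (le_max_right _ _)

lemma BddSuppOn.conj (h : BddSuppOn Φ S) :
    BddSuppOn (fun x => conj (Φ x)) S :=
  ⟨h.1.imp fun _ hC x => by simpa using hC x, h.2.imp fun _ hR x hx => hR x (by simpa using hx)⟩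

lemma BddSuppOn.integrable {μ : Measure (Fin N → ℝ)} [IsFiniteMeasureOnCompacts μ]
    (h : BddSuppOn Φ (Set.Iio N)) (hΦ : AEStronglyMeasurable Φ μ) : Integrable Φ μ := by
  obtain ⟨⟨C, hC⟩, R, hR⟩ := h
  have hbox : IsCompact (Set.pi Set.univ fun _ : Fin N => Set.Icc (-R) R) :=
    isCompact_univ_pi fun _ => isCompact_Icc
  refine (IntegrableOn.of_bound hbox.measure_lt_top hΦ.restrict C (ae_of_all _ hC))
    |>.integrable_of_forall_notMem_eq_zero fun x hx => ?_
  by_contra hx0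
  refine hx fun i _ => abs_le.1 ?_
  simpa only [_root_.ext, dif_pos i.2] using hR x hx0 i i.2

end BddSuppOn

lemma ext_comp_ext {D k : ℕ} (h : D = k) (t : Fin k → ℝ) :
    ext (fun j : Fin D => ext t j) = ext t := by
  subst h
  funext j
  by_cases hj : j < D <;> simp [_root_.ext, hj]

lemma starpC_eq_integral {n m ℓ p : ℕ} (hp : p ≤ 1) (hn : ℓ + p ≤ n) (hm : ℓ + p ≤ m)
    (f : (Fin n → ℝ) → ℂ) (g : (Fin m → ℝ) → ℂ) (t : Fin (n + m - 2 * ℓ - p) → ℝ) :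
    starpC n m ℓ p f g t =
      ∫ s, f (fun j => if (j : ℕ) < n - ℓ then ext t j else ext s (j - (n - ℓ))) *
        g (fun j => if (j : ℕ) < ℓ then ext s (ℓ - 1 - j) else ext t (n - ℓ - p + (j - ℓ)))
        ∂volOrth (Fin ℓ) := by
  rw [← volume_restrict_orth_s8]
  interval_cases p
  · simp only [starpC, arcC, if_true]
    rw [ext_comp_ext (show n + m - 2 * ℓ = n + m - 2 * ℓ - 0 from rfl) t]
    rfl
  · simp only [starpC, starC, one_ne_zero, if_false]
    rw [ext_comp_ext (by omega) t, show n - (ℓ + 1) + 1 = n - ℓ by omega,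
      show n - (ℓ + 1) = n - ℓ - 1 by omega, Nat.add_sub_cancel]

def splice (k o j : ℕ) : ℕ := if j < k then j else o + (j - k)

def revSplice (k o c j : ℕ) : ℕ := if j < k then o + (k - 1 - j) else c + (j - k)

section Splice

variable {n N k o c : ℕ}

lemma mapsTo_splice (hk : k ≤ N) (ho : o + (n - k) ≤ N) :
    Set.MapsTo (splice k o) (Set.Iio n) (Set.Iio N) := by
  intro j hj; simp only [splice, Set.mem_Iio] at *; split_ifs <;> omega

lemma mapsTo_revSplice (ho : o + k ≤ N) (hc : c + (n - k) ≤ N) :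
    Set.MapsTo (revSplice k o c) (Set.Iio n) (Set.Iio N) := by
  intro j hj; simp only [revSplice, Set.mem_Iio] at *; split_ifs <;> omega

lemma quasiMeasurePreserving_sel_splice (hko : k ≤ o) (hk : k ≤ N) (ho : o + (n - k) ≤ N) :
    Measure.QuasiMeasurePreserving (sel (splice k o) : (Fin N → ℝ) → Fin n → ℝ)
      (volOrth (Fin N)) (volOrth (Fin n)) :=
  quasiMeasurePreserving_sel (mapsTo_splice hk ho) fun i _ j _ hij => by
    simp only [splice] at hij; split_ifs at hij <;> omega

lemma quasiMeasurePreserving_sel_revSplice (hco : c + (n - k) ≤ o) (ho : o + k ≤ N) :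
    Measure.QuasiMeasurePreserving (sel (revSplice k o c) : (Fin N → ℝ) → Fin n → ℝ)
      (volOrth (Fin N)) (volOrth (Fin n)) :=
  quasiMeasurePreserving_sel (mapsTo_revSplice ho (by omega)) fun i hi j hj hij => by
    simp only [revSplice, Set.mem_Iio] at hij hi hj; split_ifs at hij <;> omega

end Splice

lemma integral_mul_conj_integral {α β : Type*} [MeasurableSpace α] [MeasurableSpace β]
    {μ : Measure α} {ν : Measure β} (F : α → ℂ) (G : β → ℂ) :
    (∫ s, F s ∂μ) * conj (∫ s', G s' ∂ν) = ∫ s, ∫ s', F s * conj (G s') ∂ν ∂μ := by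
  rw [← integral_conj, ← integral_mul_const]
  simp_rw [← integral_const_mul]

section Integrands

variable (n m ℓ p : ℕ) (f : (Fin n → ℝ) → ℂ) (g : (Fin m → ℝ) → ℂ)

/-- Coordinates `(α, r, β, s, s') ∈ ℝ^{n-ℓ-p} × ℝ^p × ℝ^{m-ℓ-p} × ℝ^ℓ × ℝ^ℓ`; integrating out
`s` and `s'` gives `|f ⋆_{ℓ+p}^ℓ g (α, r, β)|²`. -/
def normSqIntegrand (x : Fin (n + m - p) → ℝ) : ℂ :=
  f (sel (splice (n - ℓ) (n + m - 2 * ℓ - p)) x) *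
      g (sel (revSplice ℓ (n + m - 2 * ℓ - p) (n - ℓ - p)) x) *
    conj (f (sel (splice (n - ℓ) (n + m - ℓ - p)) x) *
      g (sel (revSplice ℓ (n + m - ℓ - p) (n - ℓ - p)) x))

/-- Coordinates `(σ, r, σ', v, w) ∈ ℝ^ℓ × ℝ^p × ℝ^ℓ × ℝ^{n-ℓ-p} × ℝ^{m-ℓ-p}`; integrating out
`v` and `w` gives `(f ⋆ f) (σ, r, σ') * conj ((g ⋆ g) (σ, r, σ'))`. -/
def innerIntegrand (x : Fin (n + m - p) → ℝ) : ℂ :=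
  f (sel (splice (ℓ + p) (2 * ℓ + p)) x) * f (sel (revSplice (n - ℓ - p) (2 * ℓ + p) ℓ) x) *
    conj (g (sel (splice (ℓ + p) (n + ℓ)) x) * g (sel (revSplice (m - ℓ - p) (n + ℓ) ℓ) x))

variable {n m ℓ p f g}

lemma integral_norm_starpC_sq (hp : p ≤ 1) (hn : ℓ + p ≤ n) (hm : ℓ + p ≤ m)
    (hint : Integrable (normSqIntegrand n m ℓ p f g) (volOrth (Fin (n + m - p)))) :
    ((∫ t in orth (Fin (n + m - 2 * ℓ - p)), ‖starpC n m ℓ p f g t‖ ^ 2 : ℝ) : ℂ) =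
      ∫ x, normSqIntegrand n m ℓ p f g x ∂volOrth (Fin (n + m - p)) := by
  have hdim : n + m - 2 * ℓ - p + (ℓ + ℓ) = n + m - p := by omega
  rw [volume_restrict_orth_s8, ← integral_complex_ofReal, ← integral_appendEquiv₃ hdim hint]
  refine integral_congr_ae (ae_of_all _ fun t => ?_)
  dsimp only
  rw [Complex.ofReal_pow, ← Complex.mul_conj', starpC_eq_integral hp hn hm,
    integral_mul_conj_integral]
  refine integral_congr_ae (ae_of_all _ fun s => integral_congr_ae (ae_of_all _ fun s' => ?_))
  simp only [normSqIntegrand, map_mul]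
  congr! 5 with j j j j
  all_goals simp only [sel, splice, revSplice, ext_appendEquiv]
  all_goals have := j.2; split_ifs <;> first | rfl | omega | (congr 1; omega)

lemma integral_inner_starpC (hp : p ≤ 1) (hn : ℓ + p ≤ n) (hm : ℓ + p ≤ m)
    (hint : Integrable (innerIntegrand n m ℓ p f g) (volOrth (Fin (n + m - p)))) :
    ∫ t in orth (Fin (2 * ℓ + p)), starpC n n (n - ℓ - p) p f f (fun j => ext t j) *
        conj (starpC m m (m - ℓ - p) p g g (fun j => ext t j)) =
      ∫ x, innerIntegrand n m ℓ p f g x ∂volOrth (Fin (n + m - p)) := by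
  have hdim : 2 * ℓ + p + (n - ℓ - p + (m - ℓ - p)) = n + m - p := by omega
  rw [volume_restrict_orth_s8, ← integral_appendEquiv₃ hdim hint]
  refine integral_congr_ae (ae_of_all _ fun t => ?_)
  dsimp only
  rw [starpC_eq_integral hp (by omega) (by omega), starpC_eq_integral hp (by omega) (by omega),
    ext_comp_ext (by omega), ext_comp_ext (by omega), integral_mul_conj_integral]
  refine integral_congr_ae (ae_of_all _ fun v => integral_congr_ae (ae_of_all _ fun w => ?_))
  simp only [innerIntegrand, map_mul]
  congr! 5 with j j j j
  all_goals simp only [sel, splice, revSplice, ext_appendEquiv]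
  all_goals have := j.2; split_ifs <;> first | rfl | omega | (congr 1; omega)

end Integrands

section Integrability

variable {n m ℓ p : ℕ} {f : (Fin n → ℝ) → ℂ} {g : (Fin m → ℝ) → ℂ}

lemma integrable_normSqIntegrand (hn : ℓ + p ≤ n) (hm : ℓ + p ≤ m)
    (hf : AEStronglyMeasurable f (volOrth (Fin n))) (hg : AEStronglyMeasurable g (volOrth (Fin m)))
    (hfb : BddBddSupp f) (hgb : BddBddSupp g) :
    Integrable (normSqIntegrand n m ℓ p f g) (volOrth (Fin (n + m - p))) := by
  have hcover : Set.Iio (n + m - p) ⊆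
      (splice (n - ℓ) (n + m - 2 * ℓ - p) '' Set.Iio n ∪
        revSplice ℓ (n + m - 2 * ℓ - p) (n - ℓ - p) '' Set.Iio m) ∪
      (splice (n - ℓ) (n + m - ℓ - p) '' Set.Iio n ∪
        revSplice ℓ (n + m - ℓ - p) (n - ℓ - p) '' Set.Iio m) := by
    intro i (hi : i < n + m - p)
    by_cases h₁ : i < n - ℓ
    · exact .inl (.inl ⟨i, by simp only [Set.mem_Iio]; omega, by simp [splice, h₁]⟩)
    by_cases h₂ : i < n + m - 2 * ℓ - p
    · refine .inl (.inr ⟨ℓ + (i - (n - ℓ - p)), by simp only [Set.mem_Iio]; omega, ?_⟩)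
      simp only [revSplice]; split_ifs <;> omega
    by_cases h₃ : i < n + m - ℓ - p
    · refine .inl (.inl ⟨n - ℓ + (i - (n + m - 2 * ℓ - p)), by simp only [Set.mem_Iio]; omega, ?_⟩)
      simp only [splice]; split_ifs <;> omega
    · refine .inr (.inl ⟨n - ℓ + (i - (n + m - ℓ - p)), by simp only [Set.mem_Iio]; omega, ?_⟩)
      simp only [splice]; split_ifs <;> omega
  have hF := hf.comp_quasiMeasurePreserving
    (quasiMeasurePreserving_sel_splice (k := n - ℓ) (o := n + m - 2 * ℓ - p) (N := n + m - p)
      (by omega) (by omega) (by omega))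
  have hG := hg.comp_quasiMeasurePreserving
    (quasiMeasurePreserving_sel_revSplice (k := ℓ) (o := n + m - 2 * ℓ - p) (c := n - ℓ - p)
      (N := n + m - p) (by omega) (by omega))
  have hF' := hf.comp_quasiMeasurePreserving
    (quasiMeasurePreserving_sel_splice (k := n - ℓ) (o := n + m - ℓ - p) (N := n + m - p)
      (by omega) (by omega) (by omega))
  have hG' := hg.comp_quasiMeasurePreserving
    (quasiMeasurePreserving_sel_revSplice (k := ℓ) (o := n + m - ℓ - p) (c := n - ℓ - p)
      (N := n + m - p) (by omega) (by omega))
  exact ((((hfb.bddSuppOn_sel _).mul (hgb.bddSuppOn_sel _)).mul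
    ((hfb.bddSuppOn_sel _).mul (hgb.bddSuppOn_sel _)).conj).mono hcover).integrable
    ((hF.mul hG).mul (Complex.continuous_conj.comp_aestronglyMeasurable (hF'.mul hG')))


lemma integrable_innerIntegrand (hn : ℓ + p ≤ n) (hm : ℓ + p ≤ m)
    (hf : AEStronglyMeasurable f (volOrth (Fin n))) (hg : AEStronglyMeasurable g (volOrth (Fin m)))
    (hfb : BddBddSupp f) (hgb : BddBddSupp g) :
    Integrable (innerIntegrand n m ℓ p f g) (volOrth (Fin (n + m - p))) := by
  have hcover : Set.Iio (n + m - p) ⊆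
      (splice (ℓ + p) (2 * ℓ + p) '' Set.Iio n ∪
        revSplice (n - ℓ - p) (2 * ℓ + p) ℓ '' Set.Iio n) ∪
      (splice (ℓ + p) (n + ℓ) '' Set.Iio m ∪ revSplice (m - ℓ - p) (n + ℓ) ℓ '' Set.Iio m) := by
    intro i (hi : i < n + m - p)
    by_cases h₁ : i < ℓ + p
    · exact .inl (.inl ⟨i, by simp only [Set.mem_Iio]; omega, by simp [splice, h₁]⟩)
    by_cases h₂ : i < 2 * ℓ + p
    · refine .inl (.inr ⟨n - ℓ - p + (i - ℓ), by simp only [Set.mem_Iio]; omega, ?_⟩)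
      simp only [revSplice]; split_ifs <;> omega
    by_cases h₃ : i < n + ℓ
    · refine .inl (.inl ⟨ℓ + p + (i - (2 * ℓ + p)), by simp only [Set.mem_Iio]; omega, ?_⟩)
      simp only [splice]; split_ifs <;> omega
    · refine .inr (.inl ⟨ℓ + p + (i - (n + ℓ)), by simp only [Set.mem_Iio]; omega, ?_⟩)
      simp only [splice]; split_ifs <;> omega
  have hF := hf.comp_quasiMeasurePreserving
    (quasiMeasurePreserving_sel_splice (k := ℓ + p) (o := 2 * ℓ + p) (N := n + m - p)
      (by omega) (by omega) (by omega))
  have hF' := hf.comp_quasiMeasurePreserving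
    (quasiMeasurePreserving_sel_revSplice (k := n - ℓ - p) (o := 2 * ℓ + p) (c := ℓ)
      (N := n + m - p) (by omega) (by omega))
  have hG := hg.comp_quasiMeasurePreserving
    (quasiMeasurePreserving_sel_splice (k := ℓ + p) (o := n + ℓ) (N := n + m - p)
      (by omega) (by omega) (by omega))
  have hG' := hg.comp_quasiMeasurePreserving
    (quasiMeasurePreserving_sel_revSplice (k := m - ℓ - p) (o := n + ℓ) (c := ℓ)
      (N := n + m - p) (by omega) (by omega))
  exact ((((hfb.bddSuppOn_sel _).mul (hfb.bddSuppOn_sel _)).mul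
    ((hgb.bddSuppOn_sel _).mul (hgb.bddSuppOn_sel _)).conj).mono hcover).integrable
    ((hF.mul hF').mul (Complex.continuous_conj.comp_aestronglyMeasurable (hG.mul hG')))

end Integrability

lemma MirrorSymmetric.ae_conj_sel {n N : ℕ} {φ : (Fin n → ℝ) → ℂ} (h : MirrorSymmetric φ)
    {τ : ℕ → ℕ} (hτ : Measure.QuasiMeasurePreserving (sel τ : (Fin N → ℝ) → Fin n → ℝ)
      (volOrth (Fin N)) (volOrth (Fin n))) :
    ∀ᵐ x ∂volOrth (Fin N), conj (φ (sel τ x)) = φ (sel (fun j => τ (n - 1 - j)) x) := by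
  rw [MirrorSymmetric, volume_restrict_orth_s8] at h
  filter_upwards [hτ.ae h] with x hx
  rw [hx, Complex.conj_conj, sel_rev]

/-- The index map realizing the substitution `σ = rev s'`, `σ' = s`, `v = rev α`, `w = β`
between the coordinates `(σ, r, σ', v, w)` of `innerIntegrand` and `(α, r, β, s, s')` of
`normSqIntegrand`. -/
def layoutPerm (n m ℓ p j : ℕ) : ℕ :=
  if j < ℓ then n + m - ℓ - p + (ℓ - 1 - j)
  else if j < ℓ + p then n - ℓ - p + (j - ℓ)
  else if j < 2 * ℓ + p then n + m - 2 * ℓ - p + (j - (ℓ + p))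
  else if j < n + ℓ then n - ℓ - p - 1 - (j - (2 * ℓ + p))
  else n - ℓ + (j - (n + ℓ))

section LayoutPerm

variable {n m ℓ p : ℕ}

lemma layoutPerm_comp (hp : p ≤ 1) (hn : ℓ + p ≤ n) (hm : ℓ + p ≤ m) :
    Set.EqOn (layoutPerm n m ℓ p ∘ splice (ℓ + p) (2 * ℓ + p))
      (fun j => splice (n - ℓ) (n + m - ℓ - p) (n - 1 - j)) (Set.Iio n) ∧
    Set.EqOn (layoutPerm n m ℓ p ∘ revSplice (n - ℓ - p) (2 * ℓ + p) ℓ)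
      (splice (n - ℓ) (n + m - 2 * ℓ - p)) (Set.Iio n) ∧
    Set.EqOn (layoutPerm n m ℓ p ∘ splice (ℓ + p) (n + ℓ))
      (revSplice ℓ (n + m - ℓ - p) (n - ℓ - p)) (Set.Iio m) ∧
    Set.EqOn (layoutPerm n m ℓ p ∘ fun j => revSplice (m - ℓ - p) (n + ℓ) ℓ (m - 1 - j))
      (revSplice ℓ (n + m - 2 * ℓ - p) (n - ℓ - p)) (Set.Iio m) := by
  refine ⟨?_, ?_, ?_, ?_⟩ <;> intro j hj <;>
    simp only [Set.mem_Iio, Function.comp, layoutPerm, splice, revSplice] at hj ⊢ <;>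
    split_ifs <;> omega

lemma mapsTo_layoutPerm (hm : ℓ + p ≤ m) :
    Set.MapsTo (layoutPerm n m ℓ p) (Set.Iio (n + m - p)) (Set.Iio (n + m - p)) := by
  intro j hj; simp only [layoutPerm, Set.mem_Iio] at *; split_ifs <;> omega

lemma injOn_layoutPerm (hn : ℓ + p ≤ n) (hm : ℓ + p ≤ m) :
    Set.InjOn (layoutPerm n m ℓ p) (Set.Iio (n + m - p)) := by
  intro i hi j hj hij; simp only [layoutPerm, Set.mem_Iio] at *; split_ifs at hij <;> omega

end LayoutPerm

section Mirror

variable (n m ℓ p : ℕ) (f : (Fin n → ℝ) → ℂ) (g : (Fin m → ℝ) → ℂ)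

/- `normSqIntegrand` and `innerIntegrand` with one conjugated factor each rewritten by mirror
symmetry: `conj (f (α, r, s'))` becomes `f (rev s', r, rev α)` and `conj (g (rev w, r, σ'))`
becomes `g (rev σ', r, w)`. -/
def normSqIntegrandMirror (x : Fin (n + m - p) → ℝ) : ℂ :=
  f (sel (splice (n - ℓ) (n + m - 2 * ℓ - p)) x) *
      g (sel (revSplice ℓ (n + m - 2 * ℓ - p) (n - ℓ - p)) x) *
    (f (sel (fun j => splice (n - ℓ) (n + m - ℓ - p) (n - 1 - j)) x) *
      conj (g (sel (revSplice ℓ (n + m - ℓ - p) (n - ℓ - p)) x)))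

def innerIntegrandMirror (x : Fin (n + m - p) → ℝ) : ℂ :=
  f (sel (splice (ℓ + p) (2 * ℓ + p)) x) * f (sel (revSplice (n - ℓ - p) (2 * ℓ + p) ℓ) x) *
    (conj (g (sel (splice (ℓ + p) (n + ℓ)) x)) *
      g (sel (fun j => revSplice (m - ℓ - p) (n + ℓ) ℓ (m - 1 - j)) x))

variable {n m ℓ p f g}

lemma normSqIntegrand_ae_eq (hn : ℓ + p ≤ n) (hm : ℓ + p ≤ m) (hf : MirrorSymmetric f) :
    normSqIntegrand n m ℓ p f g =ᵐ[volOrth (Fin (n + m - p))]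
      normSqIntegrandMirror n m ℓ p f g := by
  filter_upwards [hf.ae_conj_sel (N := n + m - p) (quasiMeasurePreserving_sel_splice
    (k := n - ℓ) (o := n + m - ℓ - p) (by omega) (by omega) (by omega))] with x hx
  rw [normSqIntegrand, normSqIntegrandMirror, map_mul, hx]

lemma innerIntegrand_ae_eq (hn : ℓ + p ≤ n) (hm : ℓ + p ≤ m) (hg : MirrorSymmetric g) :
    innerIntegrand n m ℓ p f g =ᵐ[volOrth (Fin (n + m - p))]
      innerIntegrandMirror n m ℓ p f g := by
  filter_upwards [hg.ae_conj_sel (N := n + m - p) (quasiMeasurePreserving_sel_revSplice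
    (k := m - ℓ - p) (o := n + ℓ) (c := ℓ) (by omega) (by omega))] with x hx
  rw [innerIntegrand, innerIntegrandMirror, map_mul, hx]

lemma innerIntegrandMirror_sel_layoutPerm (hp : p ≤ 1) (hn : ℓ + p ≤ n) (hm : ℓ + p ≤ m)
    (x : Fin (n + m - p) → ℝ) :
    innerIntegrandMirror n m ℓ p f g (sel (layoutPerm n m ℓ p) x) =
      normSqIntegrandMirror n m ℓ p f g x := by
  obtain ⟨e₁, e₂, e₃, e₄⟩ := layoutPerm_comp hp hn hm
  have h₄ : Set.MapsTo (fun j => revSplice (m - ℓ - p) (n + ℓ) ℓ (m - 1 - j)) (Set.Iio m)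
      (Set.Iio (n + m - p)) := by
    intro j hj; simp only [revSplice, Set.mem_Iio] at *; split_ifs <;> omega
  rw [innerIntegrandMirror, normSqIntegrandMirror,
    sel_sel_of_eqOn (mapsTo_splice (by omega) (by omega)) e₁,
    sel_sel_of_eqOn (mapsTo_revSplice (by omega) (by omega)) e₂,
    sel_sel_of_eqOn (mapsTo_splice (by omega) (by omega)) e₃, sel_sel_of_eqOn h₄ e₄]
  ring

theorem integral_normSqIntegrand_eq_integral_innerIntegrand (hp : p ≤ 1) (hn : ℓ + p ≤ n)
    (hm : ℓ + p ≤ m) (hf : MirrorSymmetric f) (hg : MirrorSymmetric g) :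
    ∫ x, normSqIntegrand n m ℓ p f g x ∂volOrth (Fin (n + m - p)) =
      ∫ x, innerIntegrand n m ℓ p f g x ∂volOrth (Fin (n + m - p)) := by
  calc ∫ x, normSqIntegrand n m ℓ p f g x ∂volOrth (Fin (n + m - p))
      = ∫ x, normSqIntegrandMirror n m ℓ p f g x ∂volOrth (Fin (n + m - p)) :=
        integral_congr_ae (normSqIntegrand_ae_eq hn hm hf)
    _ = ∫ x, innerIntegrandMirror n m ℓ p f g (sel (layoutPerm n m ℓ p) x)
          ∂volOrth (Fin (n + m - p)) := by
        simp_rw [innerIntegrandMirror_sel_layoutPerm hp hn hm]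
    _ = ∫ x, innerIntegrandMirror n m ℓ p f g x ∂volOrth (Fin (n + m - p)) :=
        integral_comp_sel (mapsTo_layoutPerm hm) (injOn_layoutPerm hn hm) _
    _ = ∫ x, innerIntegrand n m ℓ p f g x ∂volOrth (Fin (n + m - p)) :=
        (integral_congr_ae (innerIntegrand_ae_eq hn hm hg)).symm

end Mirror

theorem sq_norm_contraction_eq_inner_general
    (n m : ℕ)
    (f : (Fin n → ℝ) → ℂ) (g : (Fin m → ℝ) → ℂ)
    (hfmem : MemLp f 2 (volume.restrict (orth (Fin n))))
    (hgmem : MemLp g 2 (volume.restrict (orth (Fin m))))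
    (hfms : MirrorSymmetric f) (hgms : MirrorSymmetric g)
    (hfb : BddBddSupp f) (hgb : BddBddSupp g)
    (p ℓ : ℕ) (hp : p ≤ 1) (h2 : ℓ + p ≤ min n m) :
    ((∫ t in orth (Fin (n + m - 2 * ℓ - p)), ‖starpC n m ℓ p f g t‖ ^ 2 : ℝ) : ℂ) =
      ∫ t in orth (Fin (2 * ℓ + p)),
        starpC n n (n - ℓ - p) p f f (fun j => ext t (j : ℕ)) *
          (starRingEnd ℂ) (starpC m m (m - ℓ - p) p g g (fun j => ext t (j : ℕ))) := by
  have hn : ℓ + p ≤ n := h2.trans (min_le_left _ _)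
  have hm : ℓ + p ≤ m := h2.trans (min_le_right _ _)
  have hf := hfmem.aestronglyMeasurable
  have hg := hgmem.aestronglyMeasurable
  rw [volume_restrict_orth_s8] at hf hg
  rw [integral_norm_starpC_sq hp hn hm (integrable_normSqIntegrand hn hm hf hg hfb hgb),
    integral_inner_starpC hp hn hm (integrable_innerIntegrand hn hm hf hg hfb hgb),
    integral_normSqIntegrand_eq_integral_innerIntegrand hp hn hm hfms hgms]

/-- the squared `L²(ℝ₊^{n+m-2ℓ-p})`-norm of the contraction
`f ⋆_{ℓ+p}^{ℓ} g` equals the `L²(ℝ₊^{2ℓ+p})` inner product of `f ⋆_{n-ℓ}^{n-ℓ-p} f` and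
`g ⋆_{m-ℓ}^{m-ℓ-p} g`. -/
theorem sq_norm_contraction_eq_inner
    (n m : ℕ) (hn : 1 ≤ n) (hm : 1 ≤ m)
    (f : (Fin n → ℝ) → ℂ) (g : (Fin m → ℝ) → ℂ)
    (hfmem : MemLp f 2 (volume.restrict (orth (Fin n))))
    (hgmem : MemLp g 2 (volume.restrict (orth (Fin m))))
    (hfms : MirrorSymmetric f) (hgms : MirrorSymmetric g)
    (hfb : BddBddSupp f) (hgb : BddBddSupp g)
    (p ℓ : ℕ) (hp : p ≤ 1) (h1 : 1 ≤ ℓ + p) (h2 : ℓ + p ≤ min n m) (h3 : ℓ ≤ min n m - p) :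
    ((∫ t in orth (Fin (n + m - 2 * ℓ - p)), ‖starpC n m ℓ p f g t‖ ^ 2 : ℝ) : ℂ) =
      ∫ t in orth (Fin (2 * ℓ + p)),
        starpC n n (n - ℓ - p) p f f (fun j => ext t (j : ℕ)) *
          (starRingEnd ℂ) (starpC m m (m - ℓ - p) p g g (fun j => ext t (j : ℕ))) :=
  sq_norm_contraction_eq_inner_general n m f g hfmem hgmem hfms hgms hfb hgb p ℓ hp h2
end
end
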